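/- The map q : (∏_{i ∈ I} ℝ) × S¹ → (∏_{i ∈ I} S¹) × S¹ (with I infinite) given by the product of the exponential covering maps ℝ → S¹ in each of the first coordinates and the identity on the last coordinate, is not a local homeomorphism. -/
import Mathlib


/-- For an infinite index set `I`, the map
`q : (∏_{i ∈ I} ℝ) × S¹ → (∏_{i ∈ I} S¹) × S¹` given by the exponential covering map
`t ↦ e^{2πit}` on each of the first coordinates and the identity on the last coordinate
is not a local homeomorphism. -/
theorem product_exp_not_isLocalHomeomorph {I : Type*} [Infinite I] :
    ¬ IsLocalHomeomorph (fun x : (I → ℝ) × Circle =>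
        ((fun i => Circle.exp (2 * Real.pi * x.1 i), x.2) : (I → Circle) × Circle)) := by
  classical
  intro h
  obtain ⟨e, he, hfe⟩ := h ((fun _ => 0 : I → ℝ), 1)
  have hopen := e.open_source
  rw [isOpen_prod_iff] at hopen
  obtain ⟨u, v, hu, hv, h0u, h1v, huv⟩ := hopen _ _ he
  rw [isOpen_pi_iff] at hu
  obtain ⟨F, t, ht, hsub⟩ := hu _ h0u
  obtain ⟨i, hi⟩ := F.exists_notMem
  set y : I → ℝ := Function.update (fun _ => 0) i 1 with hy
  have hyu : y ∈ u := hsub (by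
    intro j hj
    have hji : j ≠ i := by rintro rfl; exact hi hj
    have : y j = 0 := Function.update_of_ne hji _ _
    rw [this]; exact (ht j hj).2)
  have hmem : (y, (1 : Circle)) ∈ e.source := huv ⟨hyu, h1v⟩
  have hmem0 : ((fun _ => 0 : I → ℝ), (1 : Circle)) ∈ e.source := huv ⟨h0u, h1v⟩
  have heq : e ((fun _ => 0 : I → ℝ), 1) = e (y, 1) := by
    rw [← hfe]
    simp only
    congr 1
    funext j
    by_cases hji : j = i
    · subst hji
      have hyj : y j = 1 := Function.update_self _ _ _
      rw [hyj]
      simpa using (Circle.exp_periodic 0).symm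
    · rw [hy, Function.update_of_ne hji]
  have hinj := e.injOn hmem0 hmem heq
  have h01 : (0 : ℝ) = 1 := by
    have h1 := congrFun (congrArg Prod.fst hinj) i
    simpa [hy, Function.update_self] using h1
  norm_num at h01
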